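/- If K is a projectively coresolved Gorenstein flat right R-module, then K is a direct summand of a module M fitting into an exact sequence 0 → M → P → M → 0 with P projective and satisfying Tor₁ᴿ(M, I) = 0 for every injective left R-module I. -/

import Mathlib

open Function LinearMap DirectSum

section Prelim
variable (R : Type) [Ring R]

def Ext1Zero (A B : Type) [AddCommGroup A] [Module R A] [AddCommGroup B] [Module R B] : Prop :=
  ∀ (E : Type) [AddCommGroup E] [Module R E] (i : B →ₗ[R] E) (p : E →ₗ[R] A),
    Function.Injective i → Function.Surjective p → LinearMap.range i = LinearMap.ker p →
    ∃ s : A →ₗ[R] E, p ∘ₗ s = LinearMap.id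

inductive TensorRelGen (M : Type) [AddCommGroup M] [Module Rᵐᵒᵖ M]
    (I : Type) [AddCommGroup I] [Module R I] : FreeAbelianGroup (M × I) → Prop
  | addLeft (m m' : M) (i : I) : TensorRelGen M I
      (FreeAbelianGroup.of (m + m', i) - FreeAbelianGroup.of (m, i) - FreeAbelianGroup.of (m', i))
  | addRight (m : M) (i i' : I) : TensorRelGen M I
      (FreeAbelianGroup.of (m, i + i') - FreeAbelianGroup.of (m, i) - FreeAbelianGroup.of (m, i'))
  | smul (r : R) (m : M) (i : I) : TensorRelGen M I
      (FreeAbelianGroup.of (MulOpposite.op r • m, i) - FreeAbelianGroup.of (m, r • i))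

def tensorRels (M : Type) [AddCommGroup M] [Module Rᵐᵒᵖ M]
    (I : Type) [AddCommGroup I] [Module R I] : AddSubgroup (FreeAbelianGroup (M × I)) :=
  AddSubgroup.closure {x | TensorRelGen R M I x}

/-- The tensor product `M ⊗_R I` of a right `R`-module and a left `R`-module. -/
abbrev Tensor (M : Type) [AddCommGroup M] [Module Rᵐᵒᵖ M]
    (I : Type) [AddCommGroup I] [Module R I] : Type :=
  FreeAbelianGroup (M × I) ⧸ tensorRels R M I

variable {M N : Type} [AddCommGroup M] [Module Rᵐᵒᵖ M] [AddCommGroup N] [Module Rᵐᵒᵖ N]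
variable {I J : Type} [AddCommGroup I] [Module R I] [AddCommGroup J] [Module R J]

private def tlAux (I : Type) [AddCommGroup I] [Module R I] (f : M →ₗ[Rᵐᵒᵖ] N) :
    FreeAbelianGroup (M × I) →+ Tensor R N I :=
  FreeAbelianGroup.lift fun p =>
    QuotientAddGroup.mk (FreeAbelianGroup.of (f p.1, p.2))

private theorem tlAux_rels (f : M →ₗ[Rᵐᵒᵖ] N) :
    tensorRels R M I ≤ (tlAux R I f).ker := by
  rw [tensorRels, AddSubgroup.closure_le]
  rintro x hx
  rcases hx with ⟨m, m', i⟩ | ⟨m, i, i'⟩ | ⟨r, m, i⟩ <;>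
    · rw [SetLike.mem_coe, AddMonoidHom.mem_ker, tlAux]
      simp only [map_sub, FreeAbelianGroup.lift_apply_of]
      simp only [← QuotientAddGroup.mk_sub]
      rw [QuotientAddGroup.eq_zero_iff]
      apply AddSubgroup.subset_closure
      first
        | exact (by simpa [map_add] using TensorRelGen.addLeft (R := R) (f m) (f m') i)
        | exact (by simpa using TensorRelGen.addRight (R := R) (f m) i i')
        | exact (by simpa [map_smul] using TensorRelGen.smul (R := R) r (f m) i)

/-- `f ⊗ id_I`. -/
def tensorLeftMap (I : Type) [AddCommGroup I] [Module R I] (f : M →ₗ[Rᵐᵒᵖ] N) :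
    Tensor R M I →+ Tensor R N I :=
  QuotientAddGroup.lift _ (tlAux R I f) (tlAux_rels R f)

private def trAux (M : Type) [AddCommGroup M] [Module Rᵐᵒᵖ M] (g : I →ₗ[R] J) :
    FreeAbelianGroup (M × I) →+ Tensor R M J :=
  FreeAbelianGroup.lift fun p =>
    QuotientAddGroup.mk (FreeAbelianGroup.of (p.1, g p.2))

private theorem trAux_rels (g : I →ₗ[R] J) :
    tensorRels R M I ≤ (trAux R M g).ker := by
  rw [tensorRels, AddSubgroup.closure_le]
  rintro x hx
  rcases hx with ⟨m, m', i⟩ | ⟨m, i, i'⟩ | ⟨r, m, i⟩ <;>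
    · rw [SetLike.mem_coe, AddMonoidHom.mem_ker, trAux]
      simp only [map_sub, FreeAbelianGroup.lift_apply_of]
      simp only [← QuotientAddGroup.mk_sub]
      rw [QuotientAddGroup.eq_zero_iff]
      apply AddSubgroup.subset_closure
      first
        | exact (by simpa using TensorRelGen.addLeft (R := R) m m' (g i))
        | exact (by simpa [map_add] using TensorRelGen.addRight (R := R) m (g i) (g i'))
        | exact (by simpa [map_smul] using TensorRelGen.smul (R := R) r m (g i))

/-- `id_M ⊗ g`. -/
def tensorRightMap (M : Type) [AddCommGroup M] [Module Rᵐᵒᵖ M] (g : I →ₗ[R] J) :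
    Tensor R M I →+ Tensor R M J :=
  QuotientAddGroup.lift _ (trAux R M g) (trAux_rels R g)

/-- A right `R`-module `F` is flat if tensoring with it preserves injectivity of maps of
left `R`-modules. -/
def IsFlat (F : Type) [AddCommGroup F] [Module Rᵐᵒᵖ F] : Prop :=
  ∀ (I J : Type) [AddCommGroup I] [Module R I] [AddCommGroup J] [Module R J]
    (g : I →ₗ[R] J), Function.Injective g → Function.Injective (tensorRightMap R F g)

/-- A short exact sequence `0 → A → B → C → 0` of right `R`-modules. -/
def SES {A B C : Type} [AddCommGroup A] [Module Rᵐᵒᵖ A] [AddCommGroup B] [Module Rᵐᵒᵖ B]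
    [AddCommGroup C] [Module Rᵐᵒᵖ C] (f : A →ₗ[Rᵐᵒᵖ] B) (g : B →ₗ[Rᵐᵒᵖ] C) : Prop :=
  Function.Injective f ∧ Function.Surjective g ∧ LinearMap.range f = LinearMap.ker g

/-- `K` is a projectively coresolved Gorenstein flat right `R`-module: a syzygy (cocycle)
in an acyclic complex of projective modules which stays exact after tensoring with any
injective left `R`-module. -/
def IsPGF (K : Type) [AddCommGroup K] [Module Rᵐᵒᵖ K] : Prop :=
  ∃ (P : ℤ → ModuleCat.{0} Rᵐᵒᵖ) (d : ∀ n : ℤ, P n →ₗ[Rᵐᵒᵖ] P (n + 1)),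
    (∀ n, Module.Projective Rᵐᵒᵖ (P n)) ∧
    (∀ n, LinearMap.range (d n) = LinearMap.ker (d (n + 1))) ∧
    (∀ (I : Type) [AddCommGroup I] [Module R I], Module.Injective R I →
      ∀ n, AddMonoidHom.range (tensorLeftMap R I (d n)) =
        AddMonoidHom.ker (tensorLeftMap R I (d (n + 1)))) ∧
    Nonempty (K ≃ₗ[Rᵐᵒᵖ] LinearMap.ker (d 0))

/-- `K` is a Gorenstein flat right `R`-module: a syzygy in an acyclic complex of flat
modules which stays exact after tensoring with any injective left `R`-module. -/
def IsGF (K : Type) [AddCommGroup K] [Module Rᵐᵒᵖ K] : Prop :=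
  ∃ (P : ℤ → ModuleCat.{0} Rᵐᵒᵖ) (d : ∀ n : ℤ, P n →ₗ[Rᵐᵒᵖ] P (n + 1)),
    (∀ n, IsFlat R (P n)) ∧
    (∀ n, LinearMap.range (d n) = LinearMap.ker (d (n + 1))) ∧
    (∀ (I : Type) [AddCommGroup I] [Module R I], Module.Injective R I →
      ∀ n, AddMonoidHom.range (tensorLeftMap R I (d n)) =
        AddMonoidHom.ker (tensorLeftMap R I (d (n + 1)))) ∧
    Nonempty (K ≃ₗ[Rᵐᵒᵖ] LinearMap.ker (d 0))

/-- `K` is a Gorenstein projective right `R`-module. -/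
def IsGorensteinProjective (K : Type) [AddCommGroup K] [Module Rᵐᵒᵖ K] : Prop :=
  ∃ (P : ℤ → ModuleCat.{0} Rᵐᵒᵖ) (d : ∀ n : ℤ, P n →ₗ[Rᵐᵒᵖ] P (n + 1)),
    (∀ n, Module.Projective Rᵐᵒᵖ (P n)) ∧
    (∀ n, LinearMap.range (d n) = LinearMap.ker (d (n + 1))) ∧
    (∀ (Q : Type) [AddCommGroup Q] [Module Rᵐᵒᵖ Q], Module.Projective Rᵐᵒᵖ Q →
      ∀ (n : ℤ) (h : P (n + 1) →ₗ[Rᵐᵒᵖ] Q), h ∘ₗ d n = 0 →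
        ∃ k : P (n + 1 + 1) →ₗ[Rᵐᵒᵖ] Q, k ∘ₗ d (n + 1) = h) ∧
    Nonempty (K ≃ₗ[Rᵐᵒᵖ] LinearMap.ker (d 0))

/-- A cotorsion right `R`-module: `Ext¹(F, C) = 0` for every flat `F`. -/
def IsCotorsion (C : Type) [AddCommGroup C] [Module Rᵐᵒᵖ C] : Prop :=
  ∀ (F : Type) [AddCommGroup F] [Module Rᵐᵒᵖ F], IsFlat R F → Ext1Zero Rᵐᵒᵖ F C

/-- A pure submodule: the inclusion stays injective after tensoring with any left module. -/
def IsPureSubmodule {M : Type} [AddCommGroup M] [Module Rᵐᵒᵖ M] (P : Submodule Rᵐᵒᵖ M) : Prop :=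
  ∀ (I : Type) [AddCommGroup I] [Module R I],
    Function.Injective (tensorLeftMap R I P.subtype)

/-- A pure epimorphism of right `R`-modules. -/
def IsPureEpi {P M : Type} [AddCommGroup P] [Module Rᵐᵒᵖ P] [AddCommGroup M] [Module Rᵐᵒᵖ M]
    (g : P →ₗ[Rᵐᵒᵖ] M) : Prop :=
  Function.Surjective g ∧ IsPureSubmodule R (LinearMap.ker g)

/-- A Mittag-Leffler right `R`-module. -/
def IsMittagLeffler (M : Type) [AddCommGroup M] [Module Rᵐᵒᵖ M] : Prop :=
  ∀ (ι : Type) (Q : ι → Type) [∀ i, AddCommGroup (Q i)] [∀ i, Module R (Q i)],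
    Function.Injective (fun (x : Tensor R M (∀ i, Q i)) (i : ι) =>
      tensorRightMap R M (LinearMap.proj i) x)

end Prelim

/-! Let `Zₙ = ker dₙ` be the cycles of the complex `(Pₙ, dₙ)` exhibiting `K ≅ Z₀` as PGF, and
take `M = ⨁ₙ Zₙ` and `P = ⨁ₙ Pₙ`. The short exact sequences `0 → Zₙ → Pₙ → Zₙ₊₁ → 0` add up, after
shifting the index, to `0 → M → P → M → 0`, and `K ≅ Z₀` is a summand of `M`. Exactness of
`P ⊗ I` at `Pₙ₋₁` makes `Zₙ ⊗ I → Pₙ ⊗ I` injective, and a direct sum of maps stays injective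
after tensoring with `I` when each summand does, since an element of `(⨁ₙ Zₙ) ⊗ I` lives on
finitely many summands. -/

section TensorLeftMap

variable {R : Type} [Ring R]
variable {M N L : Type} [AddCommGroup M] [Module Rᵐᵒᵖ M] [AddCommGroup N] [Module Rᵐᵒᵖ N]
  [AddCommGroup L] [Module Rᵐᵒᵖ L]
variable {I : Type} [AddCommGroup I] [Module R I]

theorem tensorLeftMap_mk_of (f : M →ₗ[Rᵐᵒᵖ] N) (m : M) (i : I) :
    tensorLeftMap R I f (QuotientAddGroup.mk (FreeAbelianGroup.of (m, i))) =
      QuotientAddGroup.mk (FreeAbelianGroup.of (f m, i)) := by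
  simp [tensorLeftMap, tlAux]

theorem Tensor.induction_on {p : Tensor R M I → Prop} (x : Tensor R M I) (zero : p 0)
    (tmul : ∀ (m : M) (i : I), p (QuotientAddGroup.mk (FreeAbelianGroup.of (m, i))))
    (neg : ∀ x, p x → p (-x)) (add : ∀ x y, p x → p y → p (x + y)) : p x := by
  induction x using QuotientAddGroup.induction_on with
  | H w =>
    induction w using FreeAbelianGroup.induction_on with
    | zero => exact zero
    | of q => exact tmul q.1 q.2
    | neg w hw => exact neg _ hw
    | add v w hv hw => exact add _ _ hv hw

theorem Tensor.addMonoidHom_ext {H : Type} [AddCommGroup H] {φ ψ : Tensor R M I →+ H}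
    (h : ∀ (m : M) (i : I), φ (QuotientAddGroup.mk (FreeAbelianGroup.of (m, i))) =
      ψ (QuotientAddGroup.mk (FreeAbelianGroup.of (m, i)))) : φ = ψ := by
  ext x
  exact h x.1 x.2

theorem tensorLeftMap_comp (g : N →ₗ[Rᵐᵒᵖ] L) (f : M →ₗ[Rᵐᵒᵖ] N) :
    tensorLeftMap R I (g ∘ₗ f) = (tensorLeftMap R I g).comp (tensorLeftMap R I f) :=
  Tensor.addMonoidHom_ext fun m i => by simp [tensorLeftMap_mk_of]

theorem Tensor.mk_of_add_left (m m' : M) (i : I) :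
    (QuotientAddGroup.mk (FreeAbelianGroup.of (m + m', i)) : Tensor R M I) =
      QuotientAddGroup.mk (FreeAbelianGroup.of (m, i)) +
        QuotientAddGroup.mk (FreeAbelianGroup.of (m', i)) := by
  rw [← QuotientAddGroup.mk_add, QuotientAddGroup.eq_iff_sub_mem, ← sub_sub]
  exact AddSubgroup.subset_closure (TensorRelGen.addLeft m m' i)

theorem Tensor.mk_of_zero_left (i : I) :
    (QuotientAddGroup.mk (FreeAbelianGroup.of ((0 : M), i)) : Tensor R M I) = 0 := by
  simpa using Tensor.mk_of_add_left (R := R) (0 : M) 0 i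

theorem tensorLeftMap_zero : tensorLeftMap R I (0 : M →ₗ[Rᵐᵒᵖ] N) = 0 :=
  Tensor.addMonoidHom_ext fun m i => by
    rw [tensorLeftMap_mk_of, LinearMap.zero_apply, Tensor.mk_of_zero_left]
    rfl

theorem tensorLeftMap_add (f g : M →ₗ[Rᵐᵒᵖ] N) :
    tensorLeftMap R I (f + g) = tensorLeftMap R I f + tensorLeftMap R I g :=
  Tensor.addMonoidHom_ext fun m i => by
    rw [AddMonoidHom.add_apply, tensorLeftMap_mk_of, tensorLeftMap_mk_of, tensorLeftMap_mk_of,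
      LinearMap.add_apply, Tensor.mk_of_add_left]

theorem tensorLeftMap_sum {ι : Type} (s : Finset ι) (f : ι → (M →ₗ[Rᵐᵒᵖ] N)) :
    tensorLeftMap R I (∑ n ∈ s, f n) = ∑ n ∈ s, tensorLeftMap R I (f n) := by
  classical
  induction s using Finset.induction_on with
  | empty => simpa using tensorLeftMap_zero
  | insert _ _ hn ih => rw [Finset.sum_insert hn, Finset.sum_insert hn, tensorLeftMap_add, ih]

theorem tensorLeftMap_surjective {f : M →ₗ[Rᵐᵒᵖ] N} (hf : Function.Surjective f) :
    Function.Surjective (tensorLeftMap R I f) := by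
  intro y
  induction y using Tensor.induction_on with
  | zero => exact ⟨0, map_zero _⟩
  | tmul n i =>
    obtain ⟨m, rfl⟩ := hf n
    exact ⟨_, tensorLeftMap_mk_of f m i⟩
  | neg y hy =>
    obtain ⟨x, rfl⟩ := hy
    exact ⟨-x, map_neg _ x⟩
  | add y y' hy hy' =>
    obtain ⟨x, rfl⟩ := hy
    obtain ⟨x', rfl⟩ := hy'
    exact ⟨x + x', map_add _ x x'⟩

end TensorLeftMap

section KernelCorestriction

variable {S : Type} [Ring S] {A B C : Type} [AddCommGroup A] [Module S A]
  [AddCommGroup B] [Module S B] [AddCommGroup C] [Module S C]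

def LinearMap.toKerOfExact (d : A →ₗ[S] B) (d' : B →ₗ[S] C)
    (h : LinearMap.range d = LinearMap.ker d') : A →ₗ[S] LinearMap.ker d' :=
  d.codRestrict (LinearMap.ker d') fun a => h ▸ LinearMap.mem_range_self d a

theorem LinearMap.toKerOfExact_surjective (d : A →ₗ[S] B) (d' : B →ₗ[S] C)
    (h : LinearMap.range d = LinearMap.ker d') : Function.Surjective (d.toKerOfExact d' h) := by
  rintro ⟨b, hb⟩
  obtain ⟨a, rfl⟩ := h ▸ hb
  exact ⟨a, rfl⟩

end KernelCorestriction

section Cycles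

variable {R : Type} [Ring R] {I : Type} [AddCommGroup I] [Module R I]
variable {A B C D : Type} [AddCommGroup A] [Module Rᵐᵒᵖ A] [AddCommGroup B] [Module Rᵐᵒᵖ B]
  [AddCommGroup C] [Module Rᵐᵒᵖ C] [AddCommGroup D] [Module Rᵐᵒᵖ D]

theorem ses_ker_subtype_toKerOfExact (d : A →ₗ[Rᵐᵒᵖ] B) (d' : B →ₗ[Rᵐᵒᵖ] C)
    (h : LinearMap.range d = LinearMap.ker d') :
    SES R (LinearMap.ker d).subtype (d.toKerOfExact d' h) :=
  ⟨Subtype.val_injective, d.toKerOfExact_surjective d' h, by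
    ext a
    simp [LinearMap.toKerOfExact]⟩

theorem SES.comp_linearEquiv {f : A →ₗ[Rᵐᵒᵖ] B} {g : B →ₗ[Rᵐᵒᵖ] C} (h : SES R f g)
    (e : C ≃ₗ[Rᵐᵒᵖ] D) : SES R f (e.toLinearMap ∘ₗ g) :=
  ⟨h.1, e.surjective.comp h.2.1, by rw [LinearMap.ker_comp, e.ker, Submodule.comap_bot, h.2.2]⟩

/-- Every element of `(ker dCD) ⊗ I` lifts to `B ⊗ I`; if its image in `C ⊗ I` vanishes, the
lift comes from `A ⊗ I`, which `A → B → ker dCD` kills. -/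
theorem tensorLeftMap_ker_subtype_injective
    (dAB : A →ₗ[Rᵐᵒᵖ] B) (dBC : B →ₗ[Rᵐᵒᵖ] C) (dCD : C →ₗ[Rᵐᵒᵖ] D)
    (h₁ : LinearMap.range dAB = LinearMap.ker dBC)
    (h₂ : LinearMap.range dBC = LinearMap.ker dCD)
    (hT : AddMonoidHom.range (tensorLeftMap R I dAB) =
      AddMonoidHom.ker (tensorLeftMap R I dBC)) :
    Function.Injective (tensorLeftMap R I (LinearMap.ker dCD).subtype) := by
  set c := dBC.toKerOfExact dCD h₂
  have hc_dAB : c ∘ₗ dAB = 0 := by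
    ext a
    exact (h₁ ▸ LinearMap.mem_range_self dAB a : dAB a ∈ LinearMap.ker dBC)
  rw [injective_iff_map_eq_zero]
  intro x hx
  obtain ⟨y, rfl⟩ := tensorLeftMap_surjective (I := I) (dBC.toKerOfExact_surjective dCD h₂) x
  have hy : y ∈ AddMonoidHom.ker (tensorLeftMap R I dBC) := by
    rwa [AddMonoidHom.mem_ker, ← LinearMap.subtype_comp_codRestrict dBC (LinearMap.ker dCD),
      tensorLeftMap_comp]
  rw [← hT] at hy
  obtain ⟨z, rfl⟩ := hy
  rw [← AddMonoidHom.comp_apply, ← tensorLeftMap_comp, hc_dAB, tensorLeftMap_zero,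
    AddMonoidHom.zero_apply]

end Cycles

section DirectSum

variable {S : Type} [Ring S] {ι : Type} {β γ δ : ι → Type}
  [∀ i, AddCommGroup (β i)] [∀ i, Module S (β i)] [∀ i, AddCommGroup (γ i)]
  [∀ i, Module S (γ i)] [∀ i, AddCommGroup (δ i)] [∀ i, Module S (δ i)]

theorem DirectSum.range_lmap_eq_ker_lmap (f : ∀ i, β i →ₗ[S] γ i) (g : ∀ i, γ i →ₗ[S] δ i)
    (h : ∀ i, LinearMap.range (f i) = LinearMap.ker (g i)) :
    LinearMap.range (lmap f) = LinearMap.ker (lmap g) := by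
  rw [range_lmap, ker_lmap]
  simp_rw [h]

theorem DirectSum.sum_lof_component_eq [DecidableEq ι] (m : ⨁ i, β i) {t : Finset ι}
    (ht : ∀ i ∉ t, m i = 0) : (∑ i ∈ t, lof S ι β i ∘ₗ component S ι β i) m = m := by
  ext k
  by_cases hk : k ∈ t <;>
    simp [LinearMap.sum_apply, lof_eq_of, of_apply, ← apply_eq_component, hk, ht k]

end DirectSum

section TensorDirectSum

variable {R : Type} [Ring R] {I : Type} [AddCommGroup I] [Module R I]
variable {ι : Type} {β γ : ι → Type}
  [∀ i, AddCommGroup (β i)] [∀ i, Module Rᵐᵒᵖ (β i)] [∀ i, AddCommGroup (γ i)]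
  [∀ i, Module Rᵐᵒᵖ (γ i)]

theorem ses_lmap {f : ∀ i, β i →ₗ[Rᵐᵒᵖ] γ i} {δ : ι → Type} [∀ i, AddCommGroup (δ i)]
    [∀ i, Module Rᵐᵒᵖ (δ i)] {g : ∀ i, γ i →ₗ[Rᵐᵒᵖ] δ i} (h : ∀ i, SES R (f i) (g i)) :
    SES R (lmap f) (lmap g) :=
  ⟨(lmap_injective f).2 fun i => (h i).1, (lmap_surjective g).2 fun i => (h i).2.1,
    range_lmap_eq_ker_lmap f g fun i => (h i).2.2⟩

variable [DecidableEq ι]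

theorem Tensor.exists_tensorLeftMap_sum_lof_component_eq (x : Tensor R (⨁ i, β i) I) :
    ∃ s : Finset ι, ∀ t, s ⊆ t →
      tensorLeftMap R I (∑ i ∈ t, lof Rᵐᵒᵖ ι β i ∘ₗ component Rᵐᵒᵖ ι β i) x = x := by
  classical
  induction x using Tensor.induction_on with
  | zero => exact ⟨∅, fun t _ => map_zero _⟩
  | tmul m i =>
    refine ⟨DFinsupp.support m, fun t ht => ?_⟩
    rw [tensorLeftMap_mk_of, sum_lof_component_eq m fun k hk =>
      DFinsupp.notMem_support_iff.mp fun hk' => hk (ht hk')]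
  | neg x hx =>
    obtain ⟨s, hs⟩ := hx
    exact ⟨s, fun t ht => by rw [map_neg, hs t ht]⟩
  | add x y hx hy =>
    obtain ⟨s, hs⟩ := hx
    obtain ⟨s', hs'⟩ := hy
    exact ⟨s ∪ s', fun t ht => by
      rw [map_add, hs t (Finset.union_subset_iff.mp ht).1, hs' t (Finset.union_subset_iff.mp ht).2]⟩

theorem Tensor.eq_zero_of_forall_tensorLeftMap_component_eq_zero (x : Tensor R (⨁ i, β i) I)
    (hx : ∀ i, tensorLeftMap R I (component Rᵐᵒᵖ ι β i) x = 0) : x = 0 := by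
  obtain ⟨s, hs⟩ := Tensor.exists_tensorLeftMap_sum_lof_component_eq x
  rw [← hs s subset_rfl, tensorLeftMap_sum, AddMonoidHom.finsetSum_apply]
  refine Finset.sum_eq_zero fun i _ => ?_
  rw [tensorLeftMap_comp, AddMonoidHom.comp_apply, hx i, map_zero]

theorem tensorLeftMap_lmap_injective {u : ∀ i, β i →ₗ[Rᵐᵒᵖ] γ i}
    (hu : ∀ i, Function.Injective (tensorLeftMap R I (u i))) :
    Function.Injective (tensorLeftMap R I (lmap u)) := by
  refine (injective_iff_map_eq_zero _).2 fun x hx =>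
    Tensor.eq_zero_of_forall_tensorLeftMap_component_eq_zero x fun i => hu i ?_
  have hcomm : component Rᵐᵒᵖ ι γ i ∘ₗ lmap u = u i ∘ₗ component Rᵐᵒᵖ ι β i := rfl
  rw [← AddMonoidHom.comp_apply, ← tensorLeftMap_comp, ← hcomm, tensorLeftMap_comp,
    AddMonoidHom.comp_apply, hx, map_zero, map_zero]

end TensorDirectSum

/-- A projectively coresolved Gorenstein flat module `K` is a direct
summand of a module `M` fitting into an exact sequence `0 → M → P → M → 0` with `P`
projective and `Tor₁(M, I) = 0` for every injective left `R`-module `I` (given the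
displayed sequence with `P` projective, the latter is expressed by the equivalent
condition that `f ⊗ I` remains injective). -/
theorem pgf_summand_of_periodic
    {R : Type} [Ring R] (K : Type) [AddCommGroup K] [Module Rᵐᵒᵖ K]
    (hK : IsPGF R K) :
    ∃ (M P : ModuleCat.{0} Rᵐᵒᵖ) (f : ↥M →ₗ[Rᵐᵒᵖ] ↥P) (g : ↥P →ₗ[Rᵐᵒᵖ] ↥M),
      Module.Projective Rᵐᵒᵖ ↥P ∧ SES R f g ∧
      (∀ (I : Type) [AddCommGroup I] [Module R I], Module.Injective R I →
        Function.Injective (tensorLeftMap R I f)) ∧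
      ∃ (i : K →ₗ[Rᵐᵒᵖ] ↥M) (r : ↥M →ₗ[Rᵐᵒᵖ] K), r ∘ₗ i = LinearMap.id := by
  obtain ⟨P, d, hproj, hd, hdI, ⟨e⟩⟩ := hK
  let Z : ℤ → Type := fun n => LinearMap.ker (d n)
  -- `(Equiv.subRight 1).symm n` unfolds to `n + 1`
  let shift : (⨁ n, Z n) ≃ₗ[Rᵐᵒᵖ] ⨁ n, Z (n + 1) :=
    lequivCongrLeft Rᵐᵒᵖ (Equiv.subRight 1)
  let f := lmap fun n => (LinearMap.ker (d n)).subtype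
  let g := shift.symm.toLinearMap ∘ₗ lmap fun n => (d n).toKerOfExact (d (n + 1)) (hd n)
  refine ⟨ModuleCat.of Rᵐᵒᵖ (⨁ n, Z n), ModuleCat.of Rᵐᵒᵖ (⨁ n, P n), f, g,
    inferInstanceAs (Module.Projective Rᵐᵒᵖ (Π₀ n, P n)), ?_, ?_, ?_⟩
  · exact (ses_lmap fun n => ses_ker_subtype_toKerOfExact (d n) (d (n + 1)) (hd n)).comp_linearEquiv
      (D := ⨁ n, Z n) shift.symm
  · intro I _ _ hI
    refine tensorLeftMap_lmap_injective fun n => ?_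
    obtain ⟨m, rfl⟩ : ∃ m, n = m + 1 + 1 := ⟨n - 2, by ring⟩
    exact tensorLeftMap_ker_subtype_injective (d m) (d (m + 1)) (d (m + 1 + 1)) (hd m)
      (hd (m + 1)) (hdI I hI m)
  · exact ⟨lof Rᵐᵒᵖ ℤ Z 0 ∘ₗ e.toLinearMap,
      e.symm.toLinearMap ∘ₗ component Rᵐᵒᵖ ℤ Z 0, by ext; simp⟩
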